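/- Fix ε ∈ (0, 1.88) and let p = (1+ε)/n. Then with high probability (probability tending to 1 as n → ∞), every subgraph of the random graph G(n,p) has average degree at most 6; equivalently, every nonempty vertex subset S satisfies |E(G[S])| ≤ 3|S|. -/

import Mathlib

/-!
A graph violating the bound contains a set `S` of size `s` spanning at least `3s + 1` of the
at most `s²/2` pairs inside it; we take a union bound over `S`. For `s ≤ n/3` the first moment
`C(n,s) C(s²/2, 3s+1) p^(3s+1)` is at most `(1.31/n) s 0.68^s`, which sums to `O(1/n)`. For
`s > n/3` the first moment is too large, and we use the Chernoff bound with `t = 1.1` together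
with `C(n,s) ≤ exp(n/e + min(s, n-s))`; this gives `exp(-0.0227 n)` as long as `pn ≤ 2.88`,
which is where the constraint `ε < 1.88` comes from.
-/

open MeasureTheory Filter

def graphOfFlags {n : ℕ} (χ : {e : Sym2 (Fin n) // ¬ e.IsDiag} → Bool) : SimpleGraph (Fin n) where
  Adj i j := i ≠ j ∧ ∀ h : ¬ (s(i, j) : Sym2 (Fin n)).IsDiag, χ ⟨s(i, j), h⟩ = true
  symm := by
    constructor
    intro i j ⟨hne, h⟩
    refine ⟨hne.symm, fun hd => ?_⟩
    have he : (s(j, i) : Sym2 (Fin n)) = s(i, j) := Sym2.eq_swap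
    rw [show (⟨s(j, i), hd⟩ : {e : Sym2 (Fin n) // ¬ e.IsDiag}) =
        ⟨s(i, j), he ▸ hd⟩ from Subtype.ext he]
    exact h _
  loopless := ⟨fun i h => h.1 rfl⟩

noncomputable instance (n : ℕ) : MeasurableSpace (SimpleGraph (Fin n)) := ⊤

set_option linter.deprecated false in
noncomputable def erdosRenyi (n : ℕ) (p : ℝ) : Measure (SimpleGraph (Fin n)) :=
  Measure.map graphOfFlags
    (Measure.pi fun _ : {e : Sym2 (Fin n) // ¬ e.IsDiag} =>
      (PMF.bernoulli (min (Real.toNNReal p) 1) (min_le_right _ _)).toMeasure)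

open Finset Real ProbabilityTheory
open scoped NNReal Nat

namespace ErdosRenyi

set_option linter.deprecated false in
noncomputable def bernoulliPi (ι : Type*) [Fintype ι] (q : ℝ≥0) (hq : q ≤ 1) :
    Measure (ι → Bool) :=
  Measure.pi fun _ : ι => (PMF.bernoulli q hq).toMeasure

section BernoulliProduct

variable {ι : Type*} [Fintype ι] {q : ℝ≥0} {hq : q ≤ 1}

instance : IsProbabilityMeasure (bernoulliPi ι q hq) := by
  unfold bernoulliPi; infer_instance

set_option linter.deprecated false in
lemma integral_bernoulli (f : Bool → ℝ) :
    ∫ b, f b ∂(PMF.bernoulli q hq).toMeasure = (1 - q) * f false + q * f true := by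
  simp [PMF.integral_eq_sum, PMF.bernoulli_apply, NNReal.coe_sub hq, add_comm]

set_option linter.deprecated false in
lemma bernoulliPi_real_forall_true (B : Finset ι) :
    (bernoulliPi ι q hq).real {χ | ∀ e ∈ B, χ e} = (q : ℝ) ^ #B := by
  have : {χ : ι → Bool | ∀ e ∈ B, χ e} = (B : Set ι).pi fun _ => {true} := by
    ext; simp
  simp [measureReal_def, this, bernoulliPi, PMF.bernoulli_apply]

lemma bernoulliPi_real_le_choose_mul_pow (A : Finset ι) (k : ℕ) :
    (bernoulliPi ι q hq).real {χ | k ≤ #{e ∈ A | χ e}}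
      ≤ (#A).choose k * (q : ℝ) ^ k := by
  have hcover : {χ : ι → Bool | k ≤ #{e ∈ A | χ e}} ⊆
      ⋃ B ∈ A.powersetCard k, {χ | ∀ e ∈ B, χ e} := by
    intro χ hχ
    obtain ⟨B, hB, hcard⟩ := exists_subset_card_eq hχ
    exact Set.mem_biUnion (mem_powersetCard.mpr ⟨hB.trans (filter_subset _ _), hcard⟩)
      fun e he => (mem_filter.mp (hB he)).2
  calc _ ≤ ∑ B ∈ A.powersetCard k, (bernoulliPi ι q hq).real {χ | ∀ e ∈ B, χ e} :=
        (measureReal_mono hcover (measure_ne_top _ _)).trans (measureReal_biUnion_finset_le _ _)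
    _ = _ := by
      rw [sum_congr rfl fun B hB => by
          rw [bernoulliPi_real_forall_true, (mem_powersetCard.mp hB).2],
        sum_const, card_powersetCard, nsmul_eq_mul]

lemma bernoulliPi_mgf_card_filter (A : Finset ι) (t : ℝ) :
    mgf (fun χ => (#{e ∈ A | χ e} : ℝ)) (bernoulliPi ι q hq) t
      = (1 - q + q * exp t) ^ #A := by
  classical
  set g : ι → Bool → ℝ := fun e b => if e ∈ A ∧ b then exp t else 1
  have hprod : ∀ χ : ι → Bool, exp (t * #{e ∈ A | χ e}) = ∏ e, g e (χ e) := by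
    intro χ
    rw [prod_ite, prod_const_one, mul_one, prod_const, ← exp_nat_mul, mul_comm]
    congr 4
    ext; simp
  rw [mgf, funext hprod, bernoulliPi, integral_fintype_prod_eq_prod g]
  simp_rw [integral_bernoulli, g]
  simp [apply_ite, prod_const]

lemma bernoulliPi_real_le_exp (A : Finset ι) (k : ℕ) {t : ℝ} (ht : 0 ≤ t) :
    (bernoulliPi ι q hq).real {χ | k ≤ #{e ∈ A | χ e}}
      ≤ exp (-(t * k) + q * #A * (exp t - 1)) := by
  have hmgf : (1 - q + q * exp t) ^ #A ≤ exp (q * #A * (exp t - 1)) :=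
    calc _ ≤ exp (q * (exp t - 1)) ^ #A := by
          gcongr
          · nlinarith [one_le_exp ht, q.coe_nonneg]
          · linarith [add_one_le_exp (q * (exp t - 1))]
      _ = _ := by rw [← exp_nat_mul]; ring_nf
  calc _ = (bernoulliPi ι q hq).real {χ | (k : ℝ) ≤ #{e ∈ A | χ e}} := by
        simp only [Nat.cast_le]
    _ ≤ exp (-t * k) * (1 - q + q * exp t) ^ #A := by
      rw [← bernoulliPi_mgf_card_filter]
      exact measure_ge_le_exp_mul_mgf _ ht .of_finite
    _ ≤ _ := by
      rw [neg_mul, exp_add]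
      gcongr

end BernoulliProduct

section InnerPairs

variable {V : Type*} [Fintype V] [DecidableEq V]

def innerPairs (S : Finset V) : Finset {e : Sym2 V // ¬ e.IsDiag} :=
  {e | ∀ v ∈ e.1, v ∈ S}

lemma card_innerPairs_le (S : Finset V) : #(innerPairs S) ≤ (#S).choose 2 := by
  let f : {a : Sym2 S // ¬ a.IsDiag} → {e : Sym2 V // ¬ e.IsDiag} :=
    fun a => ⟨a.1.map Subtype.val, (Sym2.isDiag_map Subtype.val_injective).not.mpr a.2⟩
  calc #(innerPairs S) ≤ #(univ.image f) := by
        refine card_le_card fun e he => ?_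
        obtain ⟨e, he'⟩ := e
        induction e using Sym2.ind with | _ u v => ?_
        have hS : u ∈ S ∧ v ∈ S := by simpa [innerPairs] using he
        exact mem_image.mpr
          ⟨⟨s(⟨u, hS.1⟩, ⟨v, hS.2⟩), by simpa using he'⟩, mem_univ _, rfl⟩
    _ ≤ Fintype.card {a : Sym2 S // ¬ a.IsDiag} := card_image_le.trans_eq card_univ
    _ = _ := by rw [Sym2.card_subtype_not_diag, Fintype.card_coe]

lemma card_innerPairs_le_sq_div_two (S : Finset V) : (#(innerPairs S) : ℝ) ≤ #S ^ 2 / 2 :=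
  calc (#(innerPairs S) : ℝ) ≤ (#S).choose 2 := by exact_mod_cast card_innerPairs_le S
    _ ≤ #S ^ 2 / (2 ! : ℕ) := Nat.choose_le_pow_div 2 #S
    _ = #S ^ 2 / 2 := by norm_num

end InnerPairs

def HasDenseSubset {V : Type*} (G : SimpleGraph V) : Prop :=
  ∃ S : Finset V, 3 * #S < Nat.card (G.induce (S : Set V)).edgeSet

lemma card_edgeSet_induce_graphOfFlags_le {n : ℕ}
    (χ : {e : Sym2 (Fin n) // ¬ e.IsDiag} → Bool) (S : Finset (Fin n)) :
    Nat.card ((graphOfFlags χ).induce (S : Set (Fin n))).edgeSet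
      ≤ #{e ∈ innerPairs S | χ e} := by
  have hmem : ∀ z ∈ ((graphOfFlags χ).induce (S : Set (Fin n))).edgeSet,
      ∀ h : ¬ (z.map Subtype.val).IsDiag,
        ⟨z.map Subtype.val, h⟩ ∈ {e ∈ innerPairs S | χ e} := by
    intro z
    induction z using Sym2.ind with | _ u v => ?_
    intro huv h
    simpa [innerPairs] using huv.2 h
  let f : ((graphOfFlags χ).induce (S : Set (Fin n))).edgeSet →
      {e // e ∈ {e ∈ innerPairs S | χ e}} :=
    fun z => ⟨⟨z.1.map Subtype.val, (Sym2.isDiag_map Subtype.val_injective).not.mpr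
      (SimpleGraph.not_isDiag_of_mem_edgeSet _ z.2)⟩, hmem z.1 z.2 _⟩
  have hf : Function.Injective f := fun z z' h =>
    Subtype.ext (Sym2.map.injective Subtype.val_injective (congrArg (·.1.1) h))
  exact (Nat.card_le_card_of_injective f hf).trans_eq (Nat.card_eq_finsetCard _)

section Estimates

lemma inv_factorial_le_exp_one_div_pow (k : ℕ) : ((k ! : ℝ))⁻¹ ≤ (exp 1 / k) ^ k := by
  rcases k.eq_zero_or_pos with rfl | hk
  · simp
  have h := pow_div_factorial_le_exp _ (Nat.cast_nonneg k) k
  rw [div_le_iff₀ (by positivity), ← exp_one_pow] at h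
  rw [div_pow, le_div_iff₀ (by positivity), inv_mul_le_iff₀ (by positivity)]
  linarith

lemma choose_le_exp_one_mul_div_pow (n s : ℕ) : (n.choose s : ℝ) ≤ (exp 1 * n / s) ^ s :=
  calc (n.choose s : ℝ) ≤ n ^ s * ((s ! : ℝ))⁻¹ := Nat.choose_le_pow_div s n
    _ ≤ n ^ s * (exp 1 / s) ^ s := by gcongr; exact inv_factorial_le_exp_one_div_pow s
    _ = _ := by rw [← mul_pow]; ring

lemma le_exp_div_exp_one (y : ℝ) : y ≤ exp (y / exp 1) := by
  simpa [mul_div_cancel₀ _ (exp_pos 1).ne'] using exp_one_mul_le_exp (x := y / exp 1)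

lemma choose_le_exp (n s : ℕ) : (n.choose s : ℝ) ≤ exp (n / exp 1 + s) := by
  have hpow : ((n : ℝ) / s) ^ s ≤ exp (n / exp 1) := by
    rcases s.eq_zero_or_pos with rfl | hs
    · simp; positivity
    calc ((n : ℝ) / s) ^ s ≤ exp (n / s / exp 1) ^ s := by
          gcongr; exact le_exp_div_exp_one _
      _ = exp (n / exp 1) := by rw [← exp_nat_mul]; congr 1; field_simp
  calc (n.choose s : ℝ) ≤ (exp 1 * n / s) ^ s := choose_le_exp_one_mul_div_pow n s
    _ = exp s * ((n : ℝ) / s) ^ s := by rw [mul_div_assoc, mul_pow, exp_one_pow]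
    _ ≤ exp s * exp (n / exp 1) := by gcongr
    _ = _ := by rw [← exp_add, add_comm]

lemma exp_one_point_one_sub_one_le : exp 1.1 - 1 ≤ 2.0204 := by
  have h := exp_bound_div_one_sub_of_interval (x := 0.1) (by norm_num) (by norm_num)
  have he := exp_one_lt_d9
  rw [show (1.1 : ℝ) = 1 + 0.1 by norm_num, exp_add]
  nlinarith [exp_pos 1, exp_pos 0.1]

lemma choose_mul_small_le (n s : ℕ) (x : ℝ) (h3s : 3 * s ≤ n) (hx0 : 0 ≤ x)
    (hx : x * n ≤ 2.88) :
    n.choose s * ((s ^ 2 / 2 : ℝ) ^ (3 * s + 1) / (3 * s + 1)! * x ^ (3 * s + 1))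
      ≤ 1.31 / n * (s * 0.68 ^ s) := by
  rcases s.eq_zero_or_pos with rfl | hs
  · simp
  have hs' : (1 : ℝ) ≤ s := by exact_mod_cast hs
  have hn : (3 : ℝ) * s ≤ n := by exact_mod_cast h3s
  set k := 3 * s + 1 with hk
  set ρ := exp 1 * s * x / 6 with hρ
  have hρ_le : ρ ≤ 1.31 * s / n := by
    rw [hρ, le_div_iff₀ (by linarith)]
    nlinarith [mul_le_mul_of_nonneg_left hx (by positivity : (0 : ℝ) ≤ exp 1 * s),
      exp_one_lt_d9]
  have hterm : (s ^ 2 / 2 : ℝ) ^ k / k ! * x ^ k ≤ ρ ^ k := by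
    have hk' : (3 : ℝ) * s ≤ k := by rw [hk]; push_cast; linarith
    calc (s ^ 2 / 2 : ℝ) ^ k / k ! * x ^ k = (s ^ 2 / 2 * x) ^ k * ((k ! : ℝ))⁻¹ := by
          rw [mul_pow]; ring
      _ ≤ (s ^ 2 / 2 * x) ^ k * (exp 1 / k) ^ k := by
          gcongr; exact inv_factorial_le_exp_one_div_pow k
      _ = (ρ * (3 * s / k)) ^ k := by rw [← mul_pow]; congr 1; rw [hρ]; ring
      _ ≤ ρ ^ k := by
          gcongr
          exact mul_le_of_le_one_right (by positivity) ((div_le_one (by linarith)).mpr hk')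
  have hbase : exp 1 * n / s * ρ ^ 3 ≤ 0.68 :=
    calc exp 1 * n / s * ρ ^ 3 ≤ exp 1 * n / s * (1.31 * s / n) ^ 3 := by gcongr
      _ = exp 1 * 1.31 ^ 3 * (s / n) ^ 2 := by field_simp
      _ ≤ 2.7182818286 * 1.31 ^ 3 * (1 / 3) ^ 2 := by
          gcongr ?_ * _ * ?_ ^ 2
          · exact exp_one_lt_d9.le
          · rw [div_le_iff₀ (by linarith)]; linarith
      _ ≤ 0.68 := by norm_num
  calc _ ≤ (exp 1 * n / s) ^ s * ρ ^ k := by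
        gcongr
        exact choose_le_exp_one_mul_div_pow n s
    _ = (exp 1 * n / s * ρ ^ 3) ^ s * ρ := by rw [hk, pow_succ, pow_mul, mul_pow]; ring
    _ ≤ 0.68 ^ s * (1.31 * s / n) := by gcongr
    _ = _ := by ring

lemma choose_le_exp_min (n s : ℕ) (hsn : s ≤ n) :
    (n.choose s : ℝ) ≤ exp (n / exp 1 + (min s (n - s) : ℕ)) := by
  rcases le_total s (n - s) with h | h
  · rw [min_eq_left h]; exact choose_le_exp n s
  · rw [min_eq_right h, ← Nat.choose_symm hsn]; exact choose_le_exp n (n - s)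

lemma min_add_sq_div_le (n s : ℕ) (hsn : s ≤ n) (h3s : n < 3 * s) :
    ((min s (n - s) : ℕ) : ℝ) + 2.909376 * ((s : ℝ) ^ 2 / n) ≤ 3.3 * s - 0.39058 * n := by
  have hn : (0 : ℝ) < n := by exact_mod_cast (show 0 < n by omega)
  have hsn' : (s : ℝ) ≤ n := by exact_mod_cast hsn
  have h3s' : (n : ℝ) < 3 * s := by exact_mod_cast h3s
  rcases le_total (2 * s) n with h2s | h2s
  · have h2s' : (2 : ℝ) * s ≤ n := by exact_mod_cast h2s
    have hmin : ((min s (n - s) : ℕ) : ℝ) ≤ s := by exact_mod_cast min_le_left _ _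
    have : (s : ℝ) ^ 2 / n ≤ (5 * s - n) / 6 := by
      rw [div_le_div_iff₀ hn (by norm_num)]
      nlinarith [mul_nonneg (sub_nonneg.mpr h3s'.le) (sub_nonneg.mpr h2s')]
    linarith
  · have h2s' : (n : ℝ) ≤ 2 * s := by exact_mod_cast h2s
    have hmin : ((min s (n - s) : ℕ) : ℝ) ≤ n - s := by
      rw [← Nat.cast_sub hsn]; exact_mod_cast min_le_right _ _
    have : (s : ℝ) ^ 2 / n ≤ (3 * s - n) / 2 := by
      rw [div_le_div_iff₀ hn (by norm_num)]
      nlinarith [mul_nonneg (sub_nonneg.mpr hsn') (sub_nonneg.mpr h2s')]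
    linarith

lemma choose_mul_exp_large_le (n s : ℕ) (x : ℝ) (hsn : s ≤ n) (h3s : n < 3 * s)
    (hx : x * n ≤ 2.88) :
    (n.choose s : ℝ) * exp (-(1.1 * (3 * s + 1)) + x * (s ^ 2 / 2) * (exp 1.1 - 1))
      ≤ exp (-(0.0227 * n)) := by
  have hn : (0 : ℝ) < n := by exact_mod_cast (show 0 < n by omega)
  have hinv : n / exp 1 ≤ 0.36788 * n := by
    rw [div_le_iff₀ (exp_pos 1)]; nlinarith [exp_one_gt_d9]
  have hquad : x * (s ^ 2 / 2) * (exp 1.1 - 1) ≤ 2.909376 * ((s : ℝ) ^ 2 / n) := by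
    have hE : 0 ≤ exp 1.1 - 1 := by linarith [one_le_exp (show (0 : ℝ) ≤ 1.1 by norm_num)]
    have hxn : x ≤ 2.88 / n := by rw [le_div_iff₀ hn]; exact hx
    calc _ ≤ 2.88 / n * ((s : ℝ) ^ 2 / 2) * 2.0204 := by
          gcongr
          exact exp_one_point_one_sub_one_le
      _ = _ := by ring
  have hmin := min_add_sq_div_le n s hsn h3s
  calc _ ≤ exp (n / exp 1 + (min s (n - s) : ℕ))
          * exp (-(1.1 * (3 * s + 1)) + x * (s ^ 2 / 2) * (exp 1.1 - 1)) := by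
        gcongr
        exact choose_le_exp_min n s hsn
    _ ≤ _ := by
        rw [← exp_add]
        gcongr
        linarith

noncomputable def badSetBound (n : ℕ) (x : ℝ) (s : ℕ) : ℝ :=
  if 3 * s ≤ n then (s ^ 2 / 2 : ℝ) ^ (3 * s + 1) / (3 * s + 1)! * x ^ (3 * s + 1)
  else exp (-(1.1 * (3 * s + 1)) + x * (s ^ 2 / 2) * (exp 1.1 - 1))

lemma choose_mul_badSetBound_le (n s : ℕ) (hsn : s ≤ n) (x : ℝ) (hx0 : 0 ≤ x)
    (hx : x * n ≤ 2.88) :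
    n.choose s * badSetBound n x s ≤ 1.31 / n * (s * 0.68 ^ s) + exp (-(0.0227 * n)) := by
  unfold badSetBound
  split_ifs with h3s
  · linarith [choose_mul_small_le n s x h3s hx0 hx, exp_pos (-(0.0227 * n))]
  · have : 0 ≤ 1.31 / n * (s * 0.68 ^ s : ℝ) := by positivity
    linarith [choose_mul_exp_large_le n s x hsn (not_le.mp h3s) hx]

noncomputable def failureBound (n : ℕ) : ℝ := 9 / n + (n + 1) * exp (-(0.0227 * n))

lemma sum_choose_mul_badSetBound_le (n : ℕ) (x : ℝ) (hx0 : 0 ≤ x) (hx : x * n ≤ 2.88) :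
    ∑ s ∈ range (n + 1), n.choose s * badSetBound n x s ≤ failureBound n := by
  have hgeom : ∑ s ∈ range (n + 1), (s * 0.68 ^ s : ℝ) ≤ 0.68 / (1 - 0.68) ^ 2 :=
    sum_le_hasSum _ (fun _ _ => by positivity)
      (hasSum_coe_mul_geometric_of_norm_lt_one (by norm_num [Real.norm_eq_abs, abs_of_pos]))
  calc _ ≤ ∑ s ∈ range (n + 1), (1.31 / n * (s * 0.68 ^ s) + exp (-(0.0227 * n))) :=
        sum_le_sum fun s hs =>
          choose_mul_badSetBound_le n s (Nat.lt_succ_iff.mp (mem_range.mp hs)) x hx0 hx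
    _ = 1.31 / n * ∑ s ∈ range (n + 1), (s * 0.68 ^ s : ℝ)
          + (n + 1) * exp (-(0.0227 * n)) := by
        rw [sum_add_distrib, ← mul_sum, sum_const, card_range, nsmul_eq_mul]; push_cast; ring
    _ ≤ 1.31 / n * (0.68 / (1 - 0.68) ^ 2) + (n + 1) * exp (-(0.0227 * n)) := by gcongr
    _ ≤ _ := by
        unfold failureBound
        gcongr
        rw [div_mul_eq_mul_div]
        gcongr
        norm_num

lemma tendsto_failureBound : Tendsto failureBound atTop (nhds 0) := by
  have hr : |exp (-0.0227)| < 1 := by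
    rw [abs_of_pos (exp_pos _), exp_lt_one_iff]; norm_num
  have hpow : ∀ n : ℕ, exp (-(0.0227 * n)) = exp (-0.0227) ^ n := fun n => by
    rw [← exp_nat_mul]; ring_nf
  unfold failureBound
  simp_rw [hpow, add_mul, one_mul]
  simpa using (tendsto_const_div_atTop_nhds_zero_nat 9).add
    (((tendsto_pow_const_mul_const_pow_of_abs_lt_one 1 hr).add
      (tendsto_pow_atTop_nhds_zero_of_abs_lt_one hr)))

end Estimates

lemma bernoulliPi_real_dense_le {n : ℕ} {q : ℝ≥0} {hq : q ≤ 1} (S : Finset (Fin n)) :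
    (bernoulliPi _ q hq).real {χ | 3 * #S + 1 ≤ #{e ∈ innerPairs S | χ e}}
      ≤ badSetBound n q #S := by
  have hm := card_innerPairs_le_sq_div_two S
  unfold badSetBound
  split_ifs
  · calc _ ≤ (#(innerPairs S)).choose (3 * #S + 1) * (q : ℝ) ^ (3 * #S + 1) :=
          bernoulliPi_real_le_choose_mul_pow _ _
      _ ≤ (#(innerPairs S) : ℝ) ^ (3 * #S + 1) / (3 * #S + 1)! * (q : ℝ) ^ (3 * #S + 1) := by
          gcongr; exact Nat.choose_le_pow_div _ _
      _ ≤ _ := by gcongr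
  · refine (bernoulliPi_real_le_exp _ _ (show (0 : ℝ) ≤ 1.1 by norm_num)).trans ?_
    have hE : 0 ≤ exp 1.1 - 1 := by linarith [one_le_exp (show (0 : ℝ) ≤ 1.1 by norm_num)]
    push_cast
    gcongr

lemma bernoulliPi_real_exists_dense_le (n : ℕ) (q : ℝ≥0) (hq : q ≤ 1) :
    (bernoulliPi _ q hq).real (graphOfFlags ⁻¹' {G : SimpleGraph (Fin n) | HasDenseSubset G})
      ≤ ∑ s ∈ range (n + 1), n.choose s * badSetBound n q s := by
  have hcover : graphOfFlags ⁻¹' {G : SimpleGraph (Fin n) | HasDenseSubset G} ⊆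
      ⋃ S ∈ (univ : Finset (Fin n)).powerset,
        {χ | 3 * #S + 1 ≤ #{e ∈ innerPairs S | χ e}} := by
    rintro χ ⟨S, hS⟩
    exact Set.mem_biUnion (mem_powerset.mpr (subset_univ S))
      (hS.trans_le (card_edgeSet_induce_graphOfFlags_le χ S))
  calc _ ≤ ∑ S ∈ (univ : Finset (Fin n)).powerset,
          (bernoulliPi _ q hq).real {χ | 3 * #S + 1 ≤ #{e ∈ innerPairs S | χ e}} :=
        (measureReal_mono hcover (measure_ne_top _ _)).trans (measureReal_biUnion_finset_le _ _)
    _ ≤ ∑ S ∈ (univ : Finset (Fin n)).powerset, badSetBound n q #S :=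
        sum_le_sum fun S _ => bernoulliPi_real_dense_le S
    _ = _ := by simp only [sum_powerset_apply_card, card_univ, Fintype.card_fin, nsmul_eq_mul]

instance (n : ℕ) (p : ℝ) : IsProbabilityMeasure (erdosRenyi n p) :=
  Measure.isProbabilityMeasure_map (measurable_of_finite _).aemeasurable

lemma erdosRenyi_real_exists_dense_le (n : ℕ) (p : ℝ) (hp : p * n ≤ 2.88) :
    (erdosRenyi n p).real {G | HasDenseSubset G} ≤ failureBound n := by
  set q := min p.toNNReal 1
  have hq : (q : ℝ) * n ≤ 2.88 := by
    calc (q : ℝ) * n ≤ max p 0 * n := by gcongr; exact (NNReal.coe_le_coe.mpr (min_le_left _ _))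
      _ ≤ 2.88 := by
          rcases le_total p 0 with h | h
          · simp [h]; norm_num
          · simpa [h] using hp
  change (Measure.map graphOfFlags (bernoulliPi _ q (min_le_right _ _))).real _ ≤ _
  rw [map_measureReal_apply (measurable_of_finite _) (.of_discrete)]
  exact (bernoulliPi_real_exists_dense_le n q _).trans
    (sum_choose_mul_badSetBound_le n q q.coe_nonneg hq)

lemma one_sub_failureBound_le_erdosRenyi_real (n : ℕ) (p : ℝ) (hp : p * n ≤ 2.88) :
    1 - failureBound n ≤ (erdosRenyi n p).real {G | ∀ S : Finset (Fin n), S.Nonempty →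
      Nat.card (G.induce (S : Set (Fin n))).edgeSet ≤ 3 * #S} := by
  have hcompl : {G : SimpleGraph (Fin n) | ∀ S : Finset (Fin n), S.Nonempty →
      Nat.card (G.induce (S : Set (Fin n))).edgeSet ≤ 3 * #S}ᶜ ⊆ {G | HasDenseSubset G} := by
    intro G hG
    obtain ⟨S, -, hS⟩ : ∃ S : Finset (Fin n), S.Nonempty ∧ 3 * #S < _ := by simpa using hG
    exact ⟨S, hS⟩
  have := (measureReal_mono hcompl).trans (erdosRenyi_real_exists_dense_le n p hp)
  rw [probReal_compl_eq_one_sub .of_discrete] at this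
  linarith

end ErdosRenyi

theorem stmt13_general (ε : ℝ) (hε1 : ε < 1.88) :
    Tendsto
      (fun n : ℕ =>
        erdosRenyi n ((1 + ε) / n)
          {G : SimpleGraph (Fin n) |
            ∀ S : Finset (Fin n), S.Nonempty →
              Nat.card (SimpleGraph.induce (↑S : Set (Fin n)) G).edgeSet ≤ 3 * S.card})
      atTop (nhds 1) := by
  have hp : ∀ n : ℕ, (1 + ε) / n * n ≤ 2.88 := fun n => by
    rcases n.eq_zero_or_pos with rfl | hn
    · norm_num
    · rw [div_mul_cancel₀ _ (by positivity)]; linarith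
  have hreal := tendsto_of_tendsto_of_tendsto_of_le_of_le
    (by simpa using tendsto_const_nhds.sub ErdosRenyi.tendsto_failureBound) tendsto_const_nhds
    (fun n => ErdosRenyi.one_sub_failureBound_le_erdosRenyi_real n _ (hp n))
    (fun n => measureReal_le_one)
  exact ENNReal.ofReal_one ▸ (ENNReal.tendsto_ofReal hreal).congr fun n => ofReal_measureReal

/-- For fixed `ε ∈ (0, 1.88)` and `p = (1+ε)/n`, whp every subgraph of `G(n,p)` has average
degree at most `6`: every nonempty vertex subset `S` satisfies `|E(G[S])| ≤ 3|S|`. -/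
theorem stmt13 (ε : ℝ) (hε : 0 < ε) (hε1 : ε < 1.88) :
    Tendsto
      (fun n : ℕ =>
        erdosRenyi n ((1 + ε) / n)
          {G : SimpleGraph (Fin n) |
            ∀ S : Finset (Fin n), S.Nonempty →
              Nat.card (SimpleGraph.induce (↑S : Set (Fin n)) G).edgeSet ≤ 3 * S.card})
      atTop (nhds 1) :=
  stmt13_general ε hε1
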